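/- Let $X_1, \dots, X_m \in \mathbb{R}^n$ and let $w \in \mathbb{R}^m$ with $\sum_i w_i = 1$, $0 \le w_i \le \frac{1}{(1-\epsilon)m}$. Then $\Big\| \sum_i w_i X_i X_i^\top - \frac{1}{m}\sum_i X_i X_i^\top \Big\|_{op} \le \sqrt{\frac{\epsilon}{1-\epsilon}} \cdot \max_{\|v\|=1} \sqrt{\frac{1}{m}\sum_{i=1}^m \langle X_i, v\rangle^4}$. -/

import Mathlib

/-- The ℓ²-operator norm of a real square matrix. -/
noncomputable def opNorm {n : ℕ} (M : Matrix (Fin n) (Fin n) ℝ) : ℝ :=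
  ‖Matrix.toEuclideanCLM (𝕜 := ℝ) M‖

/-! With `dᵢ = wᵢ - 1/m` the matrix is `∑ dᵢ XᵢXᵢᵀ`, whose bilinear form at unit vectors `u, v`
is `∑ dᵢ ⟨Xᵢ, u⟩⟨Xᵢ, v⟩`. Cauchy–Schwarz bounds its square by `(∑ dᵢ²) · ∑ ⟨Xᵢ, u⟩²⟨Xᵢ, v⟩²`;
AM–GM bounds the second factor by the mean of the two fourth-moment sums, each at most `m S²`
for the supremum `S`, and the cap on the weights gives `∑ dᵢ² = ∑ wᵢ² - 1/m ≤ ε/((1-ε)m)`. -/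

open Matrix Finset

theorem sum_sq_sub_inv_card_le {ι : Type*} [Fintype ι] {w : ι → ℝ} {c : ℝ}
    (hsum : ∑ i, w i = 1) (hw0 : ∀ i, 0 ≤ w i) (hwc : ∀ i, w i ≤ c) :
    ∑ i, (w i - 1 / Fintype.card ι) ^ 2 ≤ c - 1 / Fintype.card ι := by
  have : Nonempty ι := univ_nonempty_iff.mp (nonempty_of_sum_ne_zero (f := w) (by simp [hsum]))
  have hcard : (Fintype.card ι : ℝ) ≠ 0 := by exact_mod_cast Fintype.card_ne_zero
  have hsq : ∑ i, w i ^ 2 ≤ c :=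
    calc ∑ i, w i ^ 2 ≤ ∑ i, c * w i := sum_le_sum fun i _ => by nlinarith [hw0 i, hwc i]
      _ = c := by rw [← mul_sum, hsum, mul_one]
  calc ∑ i, (w i - 1 / Fintype.card ι) ^ 2 = ∑ i, w i ^ 2 - 1 / Fintype.card ι := by
        simp only [sub_sq, sum_add_distrib, sum_sub_distrib, ← sum_mul, ← mul_sum, hsum, sum_const,
          card_univ, nsmul_eq_mul]
        field_simp
        ring
    _ ≤ c - 1 / Fintype.card ι := by linarith

theorem sq_sum_mul_mul_le {ι : Type*} (s : Finset ι) (d a b : ι → ℝ) :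
    (∑ i ∈ s, d i * (a i * b i)) ^ 2
      ≤ (∑ i ∈ s, d i ^ 2) * ((∑ i ∈ s, a i ^ 4 + ∑ i ∈ s, b i ^ 4) / 2) :=
  calc (∑ i ∈ s, d i * (a i * b i)) ^ 2
      ≤ (∑ i ∈ s, d i ^ 2) * ∑ i ∈ s, (a i * b i) ^ 2 := sum_mul_sq_le_sq_mul_sq s _ _
    _ ≤ (∑ i ∈ s, d i ^ 2) * ((∑ i ∈ s, a i ^ 4 + ∑ i ∈ s, b i ^ 4) / 2) := by
        rw [← sum_add_distrib, sum_div]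
        gcongr with i
        nlinarith [sq_nonneg (a i ^ 2 - b i ^ 2)]

theorem dotProduct_sum_smul_vecMulVec_mulVec {α ι κ : Type*} [CommSemiring α] [Fintype ι]
    [Fintype κ] (d : ι → α) (X Y : ι → κ → α) (u v : κ → α) :
    u ⬝ᵥ (∑ i, d i • vecMulVec (X i) (Y i)) *ᵥ v = ∑ i, d i * ((u ⬝ᵥ X i) * (Y i ⬝ᵥ v)) := by
  simp only [sum_mulVec, smul_mulVec, vecMulVec_mulVec, dotProduct_sum, dotProduct_smul,
    MulOpposite.smul_eq_mul_unop, MulOpposite.unop_op, smul_eq_mul]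

theorem bddAbove_range_sqrt_sum_pow_four {ι κ : Type*} [Fintype ι] [Fintype κ]
    (X : ι → κ → ℝ) {c : ℝ} (hc : 0 ≤ c) :
    BddAbove (Set.range fun v : {v : κ → ℝ // ∑ k, v k ^ 2 = 1} =>
      √(c * ∑ i, (∑ k, X i k * v.1 k) ^ 4)) := by
  refine ⟨√(c * ∑ i, (∑ k, X i k ^ 2) ^ 2), ?_⟩
  rintro _ ⟨v, rfl⟩
  refine Real.sqrt_le_sqrt (mul_le_mul_of_nonneg_left (sum_le_sum fun i _ => ?_) hc)
  calc (∑ k, X i k * v.1 k) ^ 4 = ((∑ k, X i k * v.1 k) ^ 2) ^ 2 := by ring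
    _ ≤ ((∑ k, X i k ^ 2) * ∑ k, v.1 k ^ 2) ^ 2 := by
        gcongr
        exact sum_mul_sq_le_sq_mul_sq _ _ _
    _ = (∑ k, X i k ^ 2) ^ 2 := by rw [v.2, mul_one]

theorem sum_pow_four_le_mul_sq_iSup {ι κ : Type*} [Fintype ι] [Fintype κ]
    (X : ι → κ → ℝ) {m : ℝ} (hm : 0 < m) (v : {v : κ → ℝ // ∑ k, v k ^ 2 = 1}) :
    ∑ i, (∑ k, X i k * v.1 k) ^ 4
      ≤ m * (⨆ u : {u : κ → ℝ // ∑ k, u k ^ 2 = 1},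
          √(1 / m * ∑ i, (∑ k, X i k * u.1 k) ^ 4)) ^ 2 := by
  have hv := le_ciSup (bddAbove_range_sqrt_sum_pow_four X (by positivity : 0 ≤ 1 / m)) v
  have hsq := pow_le_pow_left₀ (Real.sqrt_nonneg _) hv 2
  rw [Real.sq_sqrt (by positivity)] at hsq
  rwa [← div_le_iff₀' hm, ← one_div_mul_eq_div]

theorem le_sqrt_mul_of_sq_le {t a s : ℝ} (hs : 0 ≤ s) (h : t ^ 2 ≤ a * s ^ 2) :
    t ≤ √a * s := by
  rw [← Real.sqrt_sq hs, ← Real.sqrt_mul' _ (sq_nonneg s)]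
  exact Real.le_sqrt_of_sq_le h

theorem weighted_second_moment_deviation_general (m n : ℕ)
    (ε : ℝ) (hε1 : ε < 1)
    (X : Fin m → Fin n → ℝ) (w : Fin m → ℝ)
    (hsum : ∑ i, w i = 1)
    (hw : ∀ i, 0 ≤ w i ∧ w i ≤ 1 / ((1 - ε) * m)) :
    opNorm ((∑ i, w i • Matrix.vecMulVec (X i) (X i))
        - (1 / (m : ℝ)) • ∑ i, Matrix.vecMulVec (X i) (X i))
      ≤ Real.sqrt (ε / (1 - ε))
        * ⨆ v : {v : Fin n → ℝ // ∑ k, v k ^ 2 = 1},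
            Real.sqrt ((1 / (m : ℝ)) * ∑ i, (∑ k, X i k * v.1 k) ^ 4) := by
  set S := ⨆ v : {v : Fin n → ℝ // ∑ k, v k ^ 2 = 1},
    Real.sqrt ((1 / (m : ℝ)) * ∑ i, (∑ k, X i k * v.1 k) ^ 4)
  have hm : (0 : ℝ) < m := Nat.cast_pos.2 (Nat.pos_of_ne_zero (by rintro rfl; simp at hsum))
  have hdev : ∑ i, (w i - 1 / m) ^ 2 ≤ ε / ((1 - ε) * m) := by
    have h := sum_sq_sub_inv_card_le hsum (fun i => (hw i).1) (fun i => (hw i).2)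
    rw [Fintype.card_fin] at h
    convert h using 1
    field_simp [(sub_pos.2 hε1).ne']
    ring
  have hmoment (x : EuclideanSpace ℝ (Fin n)) (hx : ‖x‖ = 1) :
      ∑ i, (X i ⬝ᵥ x) ^ 4 ≤ m * S ^ 2 := by
    have hx2 : ∑ k, x k ^ 2 = 1 := by rw [← EuclideanSpace.real_norm_sq_eq, hx, one_pow]
    exact sum_pow_four_le_mul_sq_iSup X hm ⟨x, hx2⟩
  have hS : 0 ≤ S := Real.iSup_nonneg fun _ => Real.sqrt_nonneg _
  have hdecomp : ∑ i, w i • vecMulVec (X i) (X i) - (1 / (m : ℝ)) • ∑ i, vecMulVec (X i) (X i)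
      = ∑ i, (w i - 1 / m) • vecMulVec (X i) (X i) := by
    simp only [sub_smul, sum_sub_distrib, smul_sum]
  rw [opNorm, hdecomp]
  refine ContinuousLinearMap.opNorm_le_of_re_inner_le (by positivity) fun x y hx hy => ?_
  rw [RCLike.re_to_real, real_inner_comm, inner_toEuclideanCLM,
    dotProduct_sum_smul_vecMulVec_mulVec]
  refine le_sqrt_mul_of_sq_le hS ((sq_sum_mul_mul_le _ _ _ _).trans ?_)
  calc (∑ i, (w i - 1 / m) ^ 2) * ((∑ i, (y ⬝ᵥ X i) ^ 4 + ∑ i, (X i ⬝ᵥ x) ^ 4) / 2)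
      ≤ ε / ((1 - ε) * m) * ((m * S ^ 2 + m * S ^ 2) / 2) := by
        gcongr
        · exact (sum_nonneg fun i _ => sq_nonneg _).trans hdev
        · simpa only [dotProduct_comm] using hmoment y hy
        · exact hmoment x hx
    _ = ε / (1 - ε) * S ^ 2 := by
        field_simp
        ring

/-- For points `X₁, …, Xₘ ∈ ℝⁿ` and weights `w` with `∑ wᵢ = 1`,
`0 ≤ wᵢ ≤ 1/((1-ε)m)`:
`‖∑ wᵢ XᵢXᵢᵀ - (1/m)∑ XᵢXᵢᵀ‖_op ≤ √(ε/(1-ε)) · max_{‖v‖=1} √((1/m)∑ ⟨Xᵢ, v⟩⁴)`. -/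
theorem weighted_second_moment_deviation (m n : ℕ) (hn : 0 < n)
    (ε : ℝ) (hε0 : 0 ≤ ε) (hε1 : ε < 1)
    (X : Fin m → Fin n → ℝ) (w : Fin m → ℝ)
    (hsum : ∑ i, w i = 1)
    (hw : ∀ i, 0 ≤ w i ∧ w i ≤ 1 / ((1 - ε) * m)) :
    opNorm ((∑ i, w i • Matrix.vecMulVec (X i) (X i))
        - (1 / (m : ℝ)) • ∑ i, Matrix.vecMulVec (X i) (X i))
      ≤ Real.sqrt (ε / (1 - ε))
        * ⨆ v : {v : Fin n → ℝ // ∑ k, v k ^ 2 = 1},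
            Real.sqrt ((1 / (m : ℝ)) * ∑ i, (∑ k, X i k * v.1 k) ^ 4) :=
  weighted_second_moment_deviation_general m n ε hε1 X w hsum hw
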